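/- For t ≥ 2, every (non-empty) graph with average degree at least 2^{t−2} contains a dominating K_t-model. -/

import Mathlib

/-- A *dominating K_t-model* in a graph G is a sequence (T 0, ..., T (t-1)) of pairwise
disjoint non-empty connected subgraphs of G such that for all i < j, every vertex of T j
has a neighbour (in G) in T i. -/
def SimpleGraph.IsDomKtModel {V : Type*} (G : SimpleGraph V) (t : ℕ) (T : Fin t → Set V) : Prop :=
  (∀ i, (T i).Nonempty) ∧
  (Pairwise fun i j => Disjoint (T i) (T j)) ∧
  (∀ i, (G.induce (T i)).Connected) ∧
  (∀ i j : Fin t, i < j → ∀ v ∈ T j, ∃ u ∈ T i, G.Adj v u)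

/-- G contains a dominating K_t-model. -/
def SimpleGraph.HasDomKtModel {V : Type*} (G : SimpleGraph V) (t : ℕ) : Prop :=
  ∃ T : Fin t → Set V, G.IsDomKtModel t T

/-!
Write `e(A)` for the number of edges of `G` inside `A`, and `B(S)` for the set of vertices of
`A \ S` with a neighbour in `S`. If `e(A) ≥ c|A|` with `c ≥ 1`, take a connected `S ⊆ A`, maximal
subject to `e(A \ S) + |B(S)| ≥ c(|A \ S| + 1)`; a single vertex qualifies. If `B(S)` is empty,
then `A \ S` is again dense and we recurse into it. Otherwise every `u ∈ B(S)` violates the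
inequality for `S ∪ {u}`, and comparing the two inequalities shows that `u` has at least `c`
neighbours in `B(S)`. So the connected set `S` dominates a set `B(S)` of average degree `≥ c`,
half the average degree `2c` of `A`. Starting from average degree `2^(t-2)` and repeating this
`t - 2` times leaves a set of average degree `≥ 1`; one of its edges gives the last two branch sets.
-/

namespace SimpleGraph

open Finset

variable {V : Type*} (G : SimpleGraph V)

lemma induce_singleton_connected (v : V) : (G.induce {v}).Connected := .of_subsingleton

variable {G} in
lemma connected_induce_insert {S : Set V} (hS : (G.induce S).Connected) {u v : V} (hu : u ∈ S)
    (huv : G.Adj u v) : (G.induce (insert v S)).Connected := by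
  rw [← Set.union_singleton]
  exact connected_induce_union hS.preconnected (G.induce_singleton_connected v).preconnected hu rfl
    huv

lemma isDomKtModel_one_singleton (v : V) : G.IsDomKtModel 1 fun _ => {v} :=
  ⟨fun _ => Set.singleton_nonempty v, fun i j hij => (hij (Subsingleton.elim i j)).elim,
    fun _ => G.induce_singleton_connected v, fun i j hij => (hij.ne (Subsingleton.elim i j)).elim⟩

variable {G} in
lemma IsDomKtModel.cons {t : ℕ} {T : Fin t → Set V} (hT : G.IsDomKtModel t T) {S : Set V}
    (hS : S.Nonempty) (hS_conn : (G.induce S).Connected) (hST : ∀ i, Disjoint S (T i))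
    (hS_dom : ∀ i, ∀ v ∈ T i, ∃ u ∈ S, G.Adj v u) :
    G.IsDomKtModel (t + 1) (Fin.cons S T) := by
  obtain ⟨hT_ne, hT_disj, hT_conn, hT_dom⟩ := hT
  refine ⟨Fin.cases hS hT_ne, ?_, Fin.cases hS_conn hT_conn, ?_⟩
  · intro i j hij
    induction i using Fin.cases <;> induction j using Fin.cases
    · exact absurd rfl hij
    · simpa using hST _
    · simpa using (hST _).symm
    · simpa using hT_disj (by simpa using hij)
  · intro i j hij v hv
    induction j using Fin.cases with
    | zero => exact absurd hij (Fin.not_lt_zero i)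
    | succ l =>
      induction i using Fin.cases with
      | zero => simpa using hS_dom l v (by simpa using hv)
      | succ k => simpa using hT_dom k l (by simpa using hij) v (by simpa using hv)

variable [DecidableRel G.Adj]

/-- `2 e(A)` in the notation of the header. -/
def degSumWithin (A : Finset V) : ℕ := ∑ u ∈ A, #{w ∈ A | G.Adj u w}

def attached (S X : Finset V) : Finset V := {w ∈ X | ∃ u ∈ S, G.Adj w u}

lemma degSumWithin_univ [Fintype V] : G.degSumWithin univ = 2 * #G.edgeFinset := by
  simp only [degSumWithin, ← sum_degrees_eq_twice_card_edges, ← card_neighborFinset_eq_degree,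
    neighborFinset_eq_filter]

lemma exists_adj_of_degSumWithin_pos {A : Finset V} (h : 0 < G.degSumWithin A) :
    ∃ u ∈ A, ∃ w ∈ A, G.Adj u w := by
  obtain ⟨u, hu, hdeg⟩ := exists_ne_zero_of_sum_ne_zero h.ne'
  obtain ⟨w, hw⟩ := card_ne_zero.1 hdeg
  exact ⟨u, hu, w, (mem_filter.1 hw).1, (mem_filter.1 hw).2⟩

lemma mul_card_le_degSumWithin {c : ℕ} {B : Finset V} (h : ∀ u ∈ B, c ≤ #{w ∈ B | G.Adj u w}) :
    c * #B ≤ G.degSumWithin B := by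
  rw [mul_comm, ← smul_eq_mul]
  exact card_nsmul_le_sum B _ c h

variable [DecidableEq V]

lemma degSumWithin_eq_erase_add {A : Finset V} {v : V} (hv : v ∈ A) :
    G.degSumWithin A = G.degSumWithin (A.erase v) + 2 * #{w ∈ A | G.Adj v w} := by
  have hsplit : ∀ u ∈ A.erase v,
      #{w ∈ A | G.Adj u w} = #{w ∈ A.erase v | G.Adj u w} + if G.Adj v u then 1 else 0 := by
    intro u _
    by_cases hvu : G.Adj v u
    · rw [filter_erase, if_pos hvu]
      exact (card_erase_add_one (mem_filter.2 ⟨hv, hvu.symm⟩)).symm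
    · rw [filter_erase, erase_eq_of_notMem fun h => hvu (mem_filter.1 h).2.symm, if_neg hvu,
        add_zero]
  have hcount : ∑ u ∈ A.erase v, (if G.Adj v u then 1 else 0) = #{w ∈ A | G.Adj v w} := by
    rw [sum_erase A (f := fun u => if G.Adj v u then 1 else 0) (if_neg (G.irrefl)), sum_boole,
      Nat.cast_id]
  rw [degSumWithin, ← add_sum_erase A _ hv, sum_congr rfl hsplit, sum_add_distrib, hcount,
    degSumWithin]
  ring

lemma attached_insert_erase (S X : Finset V) (u : V) :
    G.attached (insert u S) (X.erase u) = (G.attached S X ∪ {w ∈ X | G.Adj u w}).erase u := by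
  ext w
  simp only [attached, mem_filter, mem_erase, mem_insert, mem_union, exists_eq_or_imp]
  constructor
  · rintro ⟨⟨hwu, hwX⟩, huw | hS⟩
    · exact ⟨hwu, Or.inr ⟨hwX, huw.symm⟩⟩
    · exact ⟨hwu, Or.inl ⟨hwX, hS⟩⟩
  · rintro ⟨hwu, ⟨hwX, hS⟩ | ⟨hwX, huw⟩⟩
    · exact ⟨⟨hwu, hwX⟩, Or.inr hS⟩
    · exact ⟨⟨hwu, hwX⟩, Or.inl huw.symm⟩

lemma card_attached_insert_erase {S X : Finset V} {u : V} (hu : u ∈ G.attached S X) :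
    #(G.attached (insert u S) (X.erase u)) + #{w ∈ G.attached S X | G.Adj u w} + 1 =
      #(G.attached S X) + #{w ∈ X | G.Adj u w} := by
  have hinter : G.attached S X ∩ {w ∈ X | G.Adj u w} = {w ∈ G.attached S X | G.Adj u w} := by
    have hsub : G.attached S X ⊆ X := filter_subset _ X
    rw [inter_filter, inter_eq_left.2 hsub]
  have hunion := card_union_add_card_inter (G.attached S X) {w ∈ X | G.Adj u w}
  have herase := card_erase_add_one (mem_union_left {w ∈ X | G.Adj u w} hu)
  rw [hinter] at hunion
  rw [attached_insert_erase]
  omega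

lemma attached_singleton_erase (A : Finset V) (v : V) :
    G.attached {v} (A.erase v) = {w ∈ A | G.Adj v w} := by
  rw [← insert_empty, attached_insert_erase, erase_eq_of_notMem] <;> simp [attached]

/-- The condition `e(A \ S) + |B(S)| ≥ c(|A \ S| + 1)` of the header, doubled. -/
def IsDenseSeed (c : ℕ) (A S : Finset V) : Prop :=
  S.Nonempty ∧ S ⊆ A ∧ (G.induce (S : Set V)).Connected ∧
    2 * c * (#(A \ S) + 1) ≤ G.degSumWithin (A \ S) + 2 * #(G.attached S (A \ S))

variable {G}

lemma isDenseSeed_singleton {c : ℕ} {A : Finset V} (h : 2 * c * #A ≤ G.degSumWithin A) {v : V}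
    (hv : v ∈ A) : G.IsDenseSeed c A {v} := by
  refine ⟨singleton_nonempty v, singleton_subset_iff.2 hv, ?_, ?_⟩
  · rw [coe_singleton]
    exact G.induce_singleton_connected v
  · rwa [sdiff_singleton_eq_erase, card_erase_add_one hv, attached_singleton_erase,
      ← degSumWithin_eq_erase_add _ hv]

lemma IsDenseSeed.le_card_adj_attached {c : ℕ} {A S : Finset V} (hS : G.IsDenseSeed c A S)
    {u : V} (hu : u ∈ G.attached S (A \ S)) (hmax : ¬G.IsDenseSeed c A (insert u S)) :
    c ≤ #{w ∈ G.attached S (A \ S) | G.Adj u w} := by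
  obtain ⟨-, hSA, hS_conn, hS_dense⟩ := hS
  obtain ⟨huX, w, hwS, huw⟩ := mem_filter.1 hu
  have hfail : G.degSumWithin ((A \ S).erase u) + 2 * #(G.attached (insert u S) ((A \ S).erase u))
      < 2 * c * #(A \ S) := by
    rw [← card_erase_add_one huX, ← sdiff_insert]
    refine lt_of_not_ge fun h => hmax ⟨insert_nonempty u S, insert_subset (mem_sdiff.1 huX).1 hSA,
      ?_, h⟩
    rw [coe_insert]
    exact connected_induce_insert hS_conn hwS huw.symm
  have hdeg := G.degSumWithin_eq_erase_add huX
  have hcard := G.card_attached_insert_erase hu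
  rw [mul_add] at hS_dense
  linarith

lemma exists_connected_dominating_dense {c : ℕ} (hc : 1 ≤ c) (A : Finset V) (hA : A.Nonempty)
    (h : 2 * c * #A ≤ G.degSumWithin A) :
    ∃ S B : Finset V, S ⊆ A ∧ B ⊆ A \ S ∧ S.Nonempty ∧ B.Nonempty ∧
      (G.induce (S : Set V)).Connected ∧ (∀ v ∈ B, ∃ u ∈ S, G.Adj v u) ∧
      c * #B ≤ G.degSumWithin B := by
  induction A using Finset.strongInduction with
  | H A ih =>
  obtain ⟨v, hv⟩ := hA
  have hfin : {S | G.IsDenseSeed c A S}.Finite :=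
    A.powerset.finite_toSet.subset fun S hS => mem_powerset.2 hS.2.1
  obtain ⟨S, hS, hmax⟩ := hfin.exists_maximalFor card _ ⟨{v}, isDenseSeed_singleton h hv⟩
  rcases (G.attached S (A \ S)).eq_empty_or_nonempty with hB | hB
  · have hX_dense := hS.2.2.2
    rw [hB, card_empty, mul_zero, add_zero] at hX_dense
    have hX : (A \ S).Nonempty := nonempty_iff_ne_empty.2 fun hempty => by
      simp [hempty, degSumWithin] at hX_dense
      omega
    obtain ⟨S', B', hS'X, hB'X, hrest⟩ := ih (A \ S) (sdiff_ssubset hS.2.1 hS.1) hX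
      (hX_dense.trans' (by gcongr; omega))
    exact ⟨S', B', hS'X.trans sdiff_subset, hB'X.trans (sdiff_subset_sdiff sdiff_subset le_rfl),
      hrest⟩
  · refine ⟨S, _, hS.2.1, filter_subset _ _, hS.1, hB, hS.2.2.1, fun w hw => (mem_filter.1 hw).2,
      mul_card_le_degSumWithin G fun u hu => hS.le_card_adj_attached hu fun hins => ?_⟩
    have hcard := hmax hins (card_le_card (subset_insert u S))
    rw [card_insert_of_notMem (mem_sdiff.1 (mem_filter.1 hu).1).2] at hcard
    omega

lemma exists_isDomKtModel_subset (s : ℕ) (A : Finset V) (hA : A.Nonempty)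
    (h : 2 ^ s * #A ≤ G.degSumWithin A) :
    ∃ T : Fin (s + 2) → Set V, G.IsDomKtModel (s + 2) T ∧ ∀ i, T i ⊆ A := by
  induction s generalizing A with
  | zero =>
    obtain ⟨u, hu, w, hw, huw⟩ :=
      G.exists_adj_of_degSumWithin_pos ((card_pos.2 hA).trans_le (by simpa using h))
    refine ⟨Fin.cons {u} fun _ => {w}, (G.isDomKtModel_one_singleton w).cons
      (Set.singleton_nonempty u) (G.induce_singleton_connected u)
      (fun _ => Set.disjoint_singleton.2 huw.ne) (fun _ v hv => ⟨u, rfl, hv ▸ huw.symm⟩),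
      Fin.cases ?_ fun _ => ?_⟩ <;> simpa
  | succ s ih =>
    obtain ⟨S, B, hSA, hBA, hS, hB, hS_conn, hS_dom, hB_dense⟩ :=
      exists_connected_dominating_dense Nat.one_le_two_pow A hA
        (by rwa [pow_succ, mul_comm _ 2] at h)
    obtain ⟨T, hT, hTB⟩ := ih B hB hB_dense
    have hST : Disjoint (S : Set V) ↑(A \ S) := disjoint_coe.2 disjoint_sdiff
    refine ⟨Fin.cons ↑S T, hT.cons hS hS_conn (fun i => hST.mono_right ((hTB i).trans
      (coe_subset.2 hBA))) (fun i v hv => hS_dom v (hTB i hv)), Fin.cases ?_ fun i => ?_⟩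
    · simpa using hSA
    · simpa using (hTB i).trans (coe_subset.2 (hBA.trans sdiff_subset))

end SimpleGraph

theorem hasDomKtModel_of_average_degree_general {V : Type*} [Fintype V]
    (G : SimpleGraph V) (t : ℕ) (ht : 2 ≤ t)
    (h : (2 : ℝ) ^ (t - 2) ≤ 2 * G.edgeSet.ncard / Fintype.card V) :
    G.HasDomKtModel t := by
  classical
  obtain ⟨s, rfl⟩ := Nat.exists_eq_add_of_le' ht
  have hV : 0 < Fintype.card V := Nat.pos_of_ne_zero fun hV => by
    rw [hV, Nat.cast_zero, div_zero] at h
    exact (pow_pos two_pos _).not_ge h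
  rw [Nat.add_sub_cancel, le_div_iff₀ (by exact_mod_cast hV), ← G.coe_edgeFinset,
    Set.ncard_coe_finset] at h
  have hdense : 2 ^ s * Fintype.card V ≤ G.degSumWithin Finset.univ := by
    rw [G.degSumWithin_univ]
    exact_mod_cast h
  have : Nonempty V := Fintype.card_pos_iff.1 hV
  obtain ⟨T, hT, -⟩ := G.exists_isDomKtModel_subset s _ Finset.univ_nonempty
    (by rwa [Finset.card_univ])
  exact ⟨T, hT⟩

/-- For t ≥ 2, every non-empty graph with average degree at least 2^(t-2) contains a
dominating K_t-model. -/
theorem hasDomKtModel_of_average_degree {V : Type*} [Fintype V] [Nonempty V]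
    (G : SimpleGraph V) (t : ℕ) (ht : 2 ≤ t)
    (h : (2 : ℝ) ^ (t - 2) ≤ 2 * G.edgeSet.ncard / Fintype.card V) :
    G.HasDomKtModel t :=
  hasDomKtModel_of_average_degree_general G t ht h
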